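/- For every r ∈ ℕ with r ≥ 1, every n ∈ ℕ, and every x ∈ ℚ, the falling factorial satisfies (x)_n = Σ_{l=0}^{n} C(n,l) · C_l^{(r)}(x) · D_{n−l}^{(r)}, where C_l^{(r)}(x) are the Cauchy polynomials of the first kind of order r and D_{n−l}^{(r)} = D_{n−l}^{(r)}(0) are the Daehee numbers of order r. -/

import Mathlib

/-- `log(1+t) = ∑_{n ≥ 1} (-1)^{n+1} t^n / n` as a formal power series over `ℚ`. -/
noncomputable def logOneAdd : PowerSeries ℚ :=
  PowerSeries.mk fun n => if n = 0 then 0 else (-1 : ℚ) ^ (n + 1) / n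

/-- `e^{xt} = ∑_{n ≥ 0} x^n t^n / n!` as a formal power series over `ℚ`. -/
noncomputable def expMul (x : ℚ) : PowerSeries ℚ :=
  PowerSeries.mk fun n => x ^ n / (n.factorial : ℚ)

/-- Formal composition `f(g(t))` of power series, intended for `g` with zero
constant term (then `coeff n (g^m) = 0` for `m > n`, so the sum below is the
full composition). -/
noncomputable def psComp (f g : PowerSeries ℚ) : PowerSeries ℚ :=
  PowerSeries.mk fun n =>
    ∑ m ∈ Finset.range (n + 1),
      PowerSeries.coeff m f * PowerSeries.coeff n (g ^ m)

/-- `(1+t)^x := exp (x · log(1+t))` as a formal power series over `ℚ`. -/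
noncomputable def onePlusPow (x : ℚ) : PowerSeries ℚ :=
  psComp (PowerSeries.exp ℚ) (x • logOneAdd)

/-- The falling factorial `(x)_n = x (x-1) ⋯ (x-n+1)`. -/
def fallFact (x : ℚ) (n : ℕ) : ℚ := ∏ i ∈ Finset.range n, (x - (i : ℚ))

/-!
Since `(1+t)^0 = 1`, the Daehee hypothesis says `log(1+t)^r = t^r · D(t)`; substituting it into the
Cauchy hypothesis and cancelling `t^r` factors `(1+t)^x` as `C(t) · D(t)`, the product of the two
exponential generating functions, whose coefficients are binomial convolutions. It remains to see
that `(1+t)^x = exp(x log(1+t))` has coefficients `(x)_n / n!`: by the chain rule it solves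
`(1+t) f' = x f`, which on coefficients is the recurrence `(n+1) a_{n+1} = (x-n) a_n`.
-/

open PowerSeries

lemma logOneAdd_eq_log : logOneAdd = log ℚ := by
  ext n
  simp [logOneAdd]

lemma psComp_eq_subst (f : ℚ⟦X⟧) {g : ℚ⟦X⟧} (hg : constantCoeff g = 0) :
    psComp f g = f.subst g := by
  ext n
  rw [psComp, coeff_mk, coeff_subst' (HasSubst.of_constantCoeff_zero' hg)]
  refine (finsum_eq_sum_of_support_subset _ fun d hd => ?_).symm
  rw [Finset.coe_range, Set.mem_Iio]
  by_contra! hnd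
  exact hd (mul_eq_zero_of_right _ (coeff_of_lt_order n
    ((Nat.cast_lt.2 hnd).trans_le (le_order_pow_of_constantCoeff_eq_zero d hg))))

lemma onePlusPow_eq_subst (x : ℚ) : onePlusPow x = (exp ℚ).subst (x • log ℚ) := by
  rw [onePlusPow, logOneAdd_eq_log, psComp_eq_subst]
  simp

lemma one_add_X_mul_derivative_log {A : Type*} [CommRing A] [Algebra ℚ A] :
    (1 + X) * d⁄dX A (log A) = 1 := by
  ext n
  rw [deriv_log, add_mul, one_mul, map_add, coeff_mk, coeff_one]
  rcases n with _ | n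
  · simp
  · rw [coeff_succ_X_mul, coeff_mk, pow_succ, ← map_add]
    simp

lemma one_add_X_mul_derivative_onePlusPow (x : ℚ) :
    (1 + X) * d⁄dX ℚ (onePlusPow x) = x • onePlusPow x := by
  have hg : HasSubst (x • log ℚ) := HasSubst.of_constantCoeff_zero' (by simp)
  rw [onePlusPow_eq_subst, derivative_subst hg, derivative_exp, (d⁄dX ℚ).map_smul]
  rw [mul_smul_comm, mul_smul_comm, mul_left_comm, one_add_X_mul_derivative_log, mul_one]

lemma coeff_one_add_X_mul_derivative {R : Type*} [CommRing R] (f : R⟦X⟧) (n : ℕ) :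
    coeff n ((1 + X) * d⁄dX R f) = (n + 1) * coeff (n + 1) f + n * coeff n f := by
  rw [add_mul, one_mul, map_add, coeff_derivative]
  rcases n with _ | n
  · simp
  · rw [coeff_succ_X_mul, coeff_derivative]
    push_cast
    ring

lemma fallFact_succ (x : ℚ) (n : ℕ) : fallFact x (n + 1) = fallFact x n * (x - n) :=
  Finset.prod_range_succ _ n

lemma coeff_eq_fallFact_div_factorial {f : ℚ⟦X⟧} {x : ℚ}
    (hf : (1 + X) * d⁄dX ℚ f = x • f) (h0 : constantCoeff f = 1) (n : ℕ) :
    coeff n f = fallFact x n / n.factorial := by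
  induction n with
  | zero => simp [fallFact, h0]
  | succ n ih =>
    have hrec := congrArg (coeff n) hf
    rw [coeff_one_add_X_mul_derivative, coeff_smul, smul_eq_mul, ih] at hrec
    rw [fallFact_succ, Nat.factorial_succ]
    field_simp at hrec
    push_cast
    field_simp
    linear_combination hrec

lemma coeff_onePlusPow (x : ℚ) (n : ℕ) :
    coeff n (onePlusPow x) = fallFact x n / n.factorial :=
  coeff_eq_fallFact_div_factorial (one_add_X_mul_derivative_onePlusPow x)
    (by rw [onePlusPow, psComp, ← coeff_zero_eq_constantCoeff_apply]; simp) n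

lemma onePlusPow_zero : onePlusPow 0 = 1 := by
  ext n
  rw [coeff_onePlusPow, coeff_one]
  rcases n with _ | n
  · simp [fallFact]
  · simp [fallFact, Finset.prod_range_succ']

lemma coeff_mul_mk_div_factorial {K : Type*} [Field K] [CharZero K] (a b : ℕ → K) (n : ℕ) :
    coeff n ((mk fun k => a k / k.factorial) * mk fun k => b k / k.factorial) =
      (∑ l ∈ Finset.range (n + 1), (n.choose l : K) * a l * b (n - l)) / n.factorial := by
  rw [coeff_mul, Finset.Nat.sum_antidiagonal_eq_sum_range_succ (fun i j => coeff i _ * coeff j _),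
    Finset.sum_div]
  refine Finset.sum_congr rfl fun l hl => ?_
  have hln := Finset.mem_range_succ_iff.1 hl
  have hchoose := Nat.choose_mul_factorial_mul_factorial hln
  have hchoose_ne : (n.choose l : K) ≠ 0 := Nat.cast_ne_zero.2 (Nat.choose_pos hln).ne'
  rw [coeff_mk, coeff_mk, ← hchoose]
  push_cast
  field_simp

theorem fallFact_eq_sum_cauchy_mul_daehee_number_general
    (r : ℕ) (n : ℕ) (x : ℚ) (C D : ℕ → ℚ)
    (hC : (PowerSeries.X : PowerSeries ℚ) ^ r * onePlusPow x =
      logOneAdd ^ r * (PowerSeries.mk fun k => C k / (k.factorial : ℚ)))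
    (hD : logOneAdd ^ r * onePlusPow (0 : ℚ) =
      PowerSeries.X ^ r * (PowerSeries.mk fun k => D k / (k.factorial : ℚ))) :
    fallFact x n = ∑ l ∈ Finset.range (n + 1), (n.choose l : ℚ) * C l * D (n - l) := by
  rw [onePlusPow_zero, mul_one] at hD
  have hfactor : onePlusPow x =
      (mk fun k => C k / (k.factorial : ℚ)) * mk fun k => D k / (k.factorial : ℚ) :=
    mul_left_cancel₀ (pow_ne_zero r X_ne_zero) (by rw [hC, hD]; ring)
  have hcoeff := congrArg (coeff n) hfactor
  rw [coeff_onePlusPow, coeff_mul_mk_div_factorial] at hcoeff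
  exact (div_left_inj' (by positivity)).1 hcoeff

theorem fallFact_eq_sum_cauchy_mul_daehee_number
    (r : ℕ) (hr : 1 ≤ r) (n : ℕ) (x : ℚ) (C D : ℕ → ℚ)
    (hC : (PowerSeries.X : PowerSeries ℚ) ^ r * onePlusPow x =
      logOneAdd ^ r * (PowerSeries.mk fun k => C k / (k.factorial : ℚ)))
    (hD : logOneAdd ^ r * onePlusPow (0 : ℚ) =
      PowerSeries.X ^ r * (PowerSeries.mk fun k => D k / (k.factorial : ℚ))) :
    fallFact x n = ∑ l ∈ Finset.range (n + 1), (n.choose l : ℚ) * C l * D (n - l) :=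
  fallFact_eq_sum_cauchy_mul_daehee_number_general r n x C D hC hD
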